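/- Let u, v be factors of σ_2(σ_2(σ_3(σ_3(w)))) for some word w over {1,2,3}, arising as in the desubstitution chain: if x, y are words with Parikh-vector difference (1,0,0) (e.g., x = 1, y = empty word), then applying σ_3 twice and σ_2 twice with appropriate boundary adjustments yields factors u, v of σ_2 σ_2 σ_3 σ_3 (images, with letters 3 and 2 optionally removed/prepended at the boundary) whose Parikh-vector difference is (1, 2, −2). -/

import Mathlib

/-!
Since `σ_i(w)` ends in `i` whenever `w ≠ []`, the word `i · σ_i(w)` has factors `σ_i(w)` minus its
last letter, `σ_i(w)` and `i · σ_i(w)`, with `|w| - 1`, `|w|`, `|w| + 1` letters `i` and all other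
letters of `w`; combining these choices on the two sides realises every adjustment `δ ∈ [-2, 2]`.
The same fact shows that `w ↦ i · σ_i(w)` preserves factors, so the adjustments can be chained.
Starting from the Parikh difference `(1, 0, 0)`, the adjustments `-2, -2` for `σ₃` and `2, 2` for
`σ₂` give `(1, 0, -1)`, `(1, 0, -2)`, `(1, 1, -2)` and `(1, 2, -2)`.
-/

/-- The Arnoux-Rauzy substitution `σ_i : i ↦ i, j ↦ j i` for `j ≠ i`,
extended to words. Letters 1,2,3 are represented by `0,1,2 : Fin 3`. -/
def sigmaSub {A : Type*} [DecidableEq A] (i : A) (w : List A) : List A :=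
  w.flatMap fun j => if j = i then [i] else [j, i]

section

variable {A : Type*} [DecidableEq A]

@[simp]
lemma sigmaSub_nil (i : A) : sigmaSub i [] = [] := rfl

lemma sigmaSub_cons (i a : A) (w : List A) :
    sigmaSub i (a :: w) = (if a = i then [i] else [a, i]) ++ sigmaSub i w := by
  simp [sigmaSub]

lemma sigmaSub_append (i : A) (u v : List A) :
    sigmaSub i (u ++ v) = sigmaSub i u ++ sigmaSub i v := by
  simp [sigmaSub]

@[simp]
lemma count_sigmaSub_self (i : A) (w : List A) : (sigmaSub i w).count i = w.length := by
  induction w with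
  | nil => rfl
  | cons a w ih => by_cases h : a = i <;> simp [sigmaSub_cons, h, ih]

lemma count_sigmaSub_of_ne {i j : A} (h : j ≠ i) (w : List A) :
    (sigmaSub i w).count j = w.count j := by
  induction w with
  | nil => rfl
  | cons a w ih =>
    by_cases ha : a = i <;> simp [sigmaSub_cons, ha, List.count_cons, ih, Ne.symm h]

lemma sigmaSub_eq_append_singleton (i : A) {w : List A} (hw : w ≠ []) :
    ∃ q, sigmaSub i w = q ++ [i] := by
  obtain ⟨w, a, rfl⟩ := List.eq_nil_or_concat w |>.resolve_left hw
  by_cases h : a = i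
  · exact ⟨sigmaSub i w, by simp [sigmaSub_append, sigmaSub_cons, h]⟩
  · exact ⟨sigmaSub i w ++ [a], by simp [sigmaSub_append, sigmaSub_cons, h]⟩

lemma cons_sigmaSub_infix_cons_sigmaSub (i : A) {u w : List A} (h : u <:+: w) :
    i :: sigmaSub i u <:+: i :: sigmaSub i w := by
  obtain ⟨p, s, rfl⟩ := h
  rcases eq_or_ne p [] with rfl | hp
  · exact ⟨[], sigmaSub i s, by simp [sigmaSub_append]⟩
  · obtain ⟨q, hq⟩ := sigmaSub_eq_append_singleton i hp
    exact ⟨i :: q, sigmaSub i s, by simp [sigmaSub_append, hq]⟩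

lemma exists_infix_cons_sigmaSub_count (i : A) (w : List A) {k : ℤ} (hk : k ∈ Set.Icc (-1) 1)
    (hw : k = -1 → w ≠ []) :
    ∃ w', w' <:+: i :: sigmaSub i w ∧
      (w'.count i : ℤ) = w.length + k ∧ ∀ j ≠ i, w'.count j = w.count j := by
  obtain rfl | rfl | rfl : k = -1 ∨ k = 0 ∨ k = 1 := by grind
  · obtain ⟨q, hq⟩ := sigmaSub_eq_append_singleton i (hw rfl)
    have hcount := count_sigmaSub_self i w
    refine ⟨q, ⟨[i], [i], by simp [hq]⟩, ?_, fun j hj => ?_⟩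
    · rw [hq, List.count_append, List.count_singleton_self] at hcount
      omega
    · rw [← count_sigmaSub_of_ne hj w, hq]
      simp [Ne.symm hj]
  · exact ⟨sigmaSub i w, (List.suffix_cons _ _).isInfix, by simp,
      fun j hj => count_sigmaSub_of_ne hj w⟩
  · exact ⟨i :: sigmaSub i w, List.infix_rfl, by simp,
      fun j hj => by simp [count_sigmaSub_of_ne hj, Ne.symm hj]⟩

def parikhDiff (u v : List A) (a : A) : ℤ := u.count a - v.count a

lemma ne_nil_of_parikhDiff_eq_of_pos {u v : List A} {d : A → ℤ} (hd : parikhDiff u v = d)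
    (a : A) (ha : 0 < d a) : u ≠ [] := by
  rintro rfl
  simp [← hd, parikhDiff] at ha
  omega

lemma ne_nil_of_parikhDiff_eq_of_neg {u v : List A} {d : A → ℤ} (hd : parikhDiff u v = d)
    (a : A) (ha : d a < 0) : v ≠ [] := by
  rintro rfl
  simp [← hd, parikhDiff] at ha
  omega

lemma length_eq_sum_count [Fintype A] (l : List A) : l.length = ∑ a, l.count a := by
  simpa using (Multiset.sum_count_eq_card (s := Finset.univ) (m := (l : Multiset A)) (by simp)).symm

lemma length_sub_length_eq_sum_parikhDiff [Fintype A] (u v : List A) :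
    (u.length : ℤ) - v.length = ∑ a, parikhDiff u v a := by
  simp [parikhDiff, length_eq_sum_count]

theorem exists_infix_parikhDiff_eq_update (i : A) (u v : List A) {δ : ℤ}
    (hδ : δ ∈ Set.Icc (-2) 2) (hu : δ = -2 → u ≠ []) (hv : δ = 2 → v ≠ []) :
    ∃ u' v', u' <:+: i :: sigmaSub i u ∧ v' <:+: i :: sigmaSub i v ∧
      parikhDiff u' v' = Function.update (parikhDiff u v) i (u.length - v.length + δ) := by
  obtain ⟨k, l, hkl, hk, hl, hku, hlv⟩ : ∃ k l : ℤ, δ = k - l ∧ k ∈ Set.Icc (-1) 1 ∧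
      l ∈ Set.Icc (-1) 1 ∧ (k = -1 → u ≠ []) ∧ (l = -1 → v ≠ []) := by
    obtain rfl | rfl | rfl | rfl | rfl : δ = -2 ∨ δ = -1 ∨ δ = 0 ∨ δ = 1 ∨ δ = 2 := by grind
    exacts [⟨-1, 1, by grind⟩, ⟨0, 1, by grind⟩, ⟨0, 0, by grind⟩, ⟨1, 0, by grind⟩,
      ⟨1, -1, by grind⟩]
  obtain ⟨u', hu', hu'i, hu'j⟩ := exists_infix_cons_sigmaSub_count i u hk hku
  obtain ⟨v', hv', hv'i, hv'j⟩ := exists_infix_cons_sigmaSub_count i v hl hlv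
  refine ⟨u', v', hu', hv', funext fun j => ?_⟩
  rcases eq_or_ne j i with rfl | hj
  · simp only [parikhDiff, hu'i, hv'i, hkl, Function.update_self]
    ring
  · simp [parikhDiff, hj, hu'j, hv'j]

theorem exists_infix_cons_sigmaSub_of_infix [Fintype A] (i : A) (δ : ℤ) {u v U V : List A}
    {d d' : A → ℤ} (hU : u <:+: U) (hV : v <:+: V) (hd : parikhDiff u v = d)
    (hd' : Function.update d i (∑ a, d a + δ) = d') (hδ : δ ∈ Set.Icc (-2) 2)
    (hu : δ = -2 → u ≠ []) (hv : δ = 2 → v ≠ []) :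
    ∃ u' v', u' <:+: i :: sigmaSub i U ∧ v' <:+: i :: sigmaSub i V ∧ parikhDiff u' v' = d' := by
  obtain ⟨u', v', hu', hv', hd''⟩ := exists_infix_parikhDiff_eq_update i u v hδ hu hv
  refine ⟨u', v', hu'.trans (cons_sigmaSub_infix_cons_sigmaSub i hU),
    hv'.trans (cons_sigmaSub_infix_cons_sigmaSub i hV), ?_⟩
  rw [hd'', length_sub_length_eq_sum_parikhDiff, hd, hd']

end

/-- Desubstitution chain: if `x, y` have Parikh-vector difference `(1,0,0)`,
then applying `σ₃` twice and then `σ₂` twice (with the boundary adjustments,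
i.e. passing to factors of `i · σ_i(·)` at each step) yields factors `u, v`
of the respective images with Parikh-vector difference `(1, 2, −2)`.
Letters 1,2,3 are `0,1,2 : Fin 3`, so `σ₂ = sigmaSub 1` and `σ₃ = sigmaSub 2`. -/
theorem parikh_chain_2233 (x y : List (Fin 3))
    (h1 : (x.count 0 : ℤ) - y.count 0 = 1)
    (h2 : (x.count 1 : ℤ) - y.count 1 = 0)
    (h3 : (x.count 2 : ℤ) - y.count 2 = 0) :
    ∃ u v : List (Fin 3),
      u <:+: 1 :: sigmaSub 1 (1 :: sigmaSub 1 (2 :: sigmaSub 2 (2 :: sigmaSub 2 x))) ∧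
      v <:+: 1 :: sigmaSub 1 (1 :: sigmaSub 1 (2 :: sigmaSub 2 (2 :: sigmaSub 2 y))) ∧
      (u.count 0 : ℤ) - v.count 0 = 1 ∧
      (u.count 1 : ℤ) - v.count 1 = 2 ∧
      (u.count 2 : ℤ) - v.count 2 = -2 := by
  have hd₀ : parikhDiff x y = ![1, 0, 0] := by
    ext a; fin_cases a <;> simp [parikhDiff, h1, h2, h3]
  obtain ⟨u₁, v₁, hu₁, hv₁, hd₁⟩ := exists_infix_cons_sigmaSub_of_infix 2 (-2)
    (d' := ![1, 0, -1]) List.infix_rfl List.infix_rfl hd₀ (by decide) (by norm_num)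
    (fun _ => ne_nil_of_parikhDiff_eq_of_pos hd₀ 0 (by decide)) (by norm_num)
  obtain ⟨u₂, v₂, hu₂, hv₂, hd₂⟩ := exists_infix_cons_sigmaSub_of_infix 2 (-2)
    (d' := ![1, 0, -2]) hu₁ hv₁ hd₁ (by decide) (by norm_num)
    (fun _ => ne_nil_of_parikhDiff_eq_of_pos hd₁ 0 (by decide)) (by norm_num)
  obtain ⟨u₃, v₃, hu₃, hv₃, hd₃⟩ := exists_infix_cons_sigmaSub_of_infix 1 2
    (d' := ![1, 1, -2]) hu₂ hv₂ hd₂ (by decide) (by norm_num) (by norm_num)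
    (fun _ => ne_nil_of_parikhDiff_eq_of_neg hd₂ 2 (by decide))
  obtain ⟨u₄, v₄, hu₄, hv₄, hd₄⟩ := exists_infix_cons_sigmaSub_of_infix 1 2
    (d' := ![1, 2, -2]) hu₃ hv₃ hd₃ (by decide) (by norm_num) (by norm_num)
    (fun _ => ne_nil_of_parikhDiff_eq_of_neg hd₃ 2 (by decide))
  exact ⟨u₄, v₄, hu₄, hv₄, congrFun hd₄ 0, congrFun hd₄ 1, congrFun hd₄ 2⟩
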